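/- Let G be a finite group and let H and K be CD-subgroups of G. Then H ∩ K is a CD-subgroup of G. -/

import Mathlib

open Pointwise

/-- The Chermak–Delgado index-measure of a subgroup `H` of `G`:
`m(G,H) = |G:H| * |G:C_G(H)|`. -/
noncomputable def cdMeasure {G : Type*} [Group G] (H : Subgroup G) : ℕ :=
  H.index * (Subgroup.centralizer (H : Set G)).index

/-- `μ(G)`, the minimum of `m(G,H)` over all subgroups `H ≤ G`. -/
noncomputable def cdMu (G : Type*) [Group G] : ℕ :=
  sInf {n : ℕ | ∃ H : Subgroup G, cdMeasure H = n}

/-- A subgroup `H ≤ G` is a CD-subgroup if `m(G,H) = μ(G)`. -/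
def IsCDSubgroup {G : Type*} [Group G] (H : Subgroup G) : Prop :=
  cdMeasure H = cdMu G

/-!
Both factors of `m(H) = |G:H| · |G:C_G(H)|` satisfy a submodular-type inequality:
`|G:H⊓K| · |G:H⊔K| ≤ |G:H| · |G:K|`, and since `C_G(H) ⊔ C_G(K) ≤ C_G(H⊓K)` and
`C_G(H⊔K) = C_G(H) ⊓ C_G(K)`, the same holds for the centralizer indices.
Hence `m(H⊓K) · m(H⊔K) ≤ m(H) · m(K) = μ²`, and as neither `m(H⊓K)` nor `m(H⊔K)`
is below `μ`, both equal `μ`.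
-/

namespace Subgroup

variable {G : Type*} [Group G]

theorem index_inf_mul_index_sup_le (H K : Subgroup G) [H.FiniteIndex] :
    (H ⊓ K).index * (H ⊔ K).index ≤ H.index * K.index := by
  have : H.IsFiniteRelIndex (H ⊔ K) := isFiniteRelIndex_of_finiteIndex
  calc (H ⊓ K).index * (H ⊔ K).index
      = H.relIndex K * (H ⊔ K).index * K.index := by
        rw [← inf_relIndex_right, ← relIndex_mul_index (inf_le_right : H ⊓ K ≤ K)]; ring
    _ ≤ H.relIndex (H ⊔ K) * (H ⊔ K).index * K.index := by
        gcongr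
        exact relIndex_le_of_le_right le_sup_right relIndex_ne_zero
    _ = H.index * K.index := by rw [relIndex_mul_index le_sup_left]

theorem centralizer_sup (H K : Subgroup G) :
    centralizer ((H ⊔ K : Subgroup G) : Set G) = centralizer (H : Set G) ⊓ centralizer K := by
  rw [sup_eq_closure, centralizer_closure]
  exact SetLike.coe_injective Set.centralizer_union

theorem centralizer_sup_le_centralizer_inf (H K : Subgroup G) :
    centralizer (H : Set G) ⊔ centralizer K ≤ centralizer ((H ⊓ K : Subgroup G) : Set G) :=
  sup_le (centralizer_le inf_le_left) (centralizer_le inf_le_right)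

end Subgroup

section ChermakDelgado

variable {G : Type*} [Group G]

open Subgroup

theorem cdMu_le_cdMeasure (H : Subgroup G) : cdMu G ≤ cdMeasure H :=
  Nat.sInf_le ⟨H, rfl⟩

variable [Finite G]

theorem cdMeasure_pos (H : Subgroup G) : 0 < cdMeasure H :=
  Nat.pos_of_ne_zero (mul_ne_zero FiniteIndex.index_ne_zero FiniteIndex.index_ne_zero)

theorem cdMeasure_inf_mul_cdMeasure_sup_le (H K : Subgroup G) :
    cdMeasure (H ⊓ K) * cdMeasure (H ⊔ K) ≤ cdMeasure H * cdMeasure K := by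
  set A := centralizer (H : Set G)
  set B := centralizer (K : Set G)
  have hinf : (centralizer ((H ⊓ K : Subgroup G) : Set G)).index ≤ (A ⊔ B).index :=
    index_antitone (centralizer_sup_le_centralizer_inf H K)
  have hsup : (centralizer ((H ⊔ K : Subgroup G) : Set G)).index = (A ⊓ B).index := by
    rw [centralizer_sup]
  calc cdMeasure (H ⊓ K) * cdMeasure (H ⊔ K)
      = ((H ⊓ K).index * (H ⊔ K).index) *
        ((centralizer ((H ⊓ K : Subgroup G) : Set G)).index *
          (centralizer ((H ⊔ K : Subgroup G) : Set G)).index) := by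
        unfold cdMeasure; ring
    _ ≤ (H.index * K.index) * ((A ⊔ B).index * (A ⊓ B).index) := by
        rw [hsup]
        exact Nat.mul_le_mul (index_inf_mul_index_sup_le H K) (Nat.mul_le_mul_right _ hinf)
    _ ≤ (H.index * K.index) * (A.index * B.index) := by
        rw [mul_comm (A ⊔ B).index]
        exact Nat.mul_le_mul_left _ (index_inf_mul_index_sup_le A B)
    _ = cdMeasure H * cdMeasure K := by unfold cdMeasure; ring

end ChermakDelgado

theorem stmt_2 {G : Type*} [Group G] [Finite G] (H K : Subgroup G)
    (hH : IsCDSubgroup H) (hK : IsCDSubgroup K) :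
    IsCDSubgroup (H ⊓ K) := by
  have hμ_inf := cdMu_le_cdMeasure (H ⊓ K)
  have hμ_sup := cdMu_le_cdMeasure (H ⊔ K)
  have key : cdMeasure (H ⊓ K) * cdMeasure (H ⊔ K) ≤ cdMu G * cdMeasure (H ⊔ K) :=
    calc cdMeasure (H ⊓ K) * cdMeasure (H ⊔ K) ≤ cdMeasure H * cdMeasure K :=
          cdMeasure_inf_mul_cdMeasure_sup_le H K
      _ = cdMu G * cdMu G := by rw [hH, hK]
      _ ≤ cdMu G * cdMeasure (H ⊔ K) := Nat.mul_le_mul_left _ hμ_sup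
  exact le_antisymm (Nat.le_of_mul_le_mul_right key (cdMeasure_pos _)) hμ_inf
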